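/- arXiv:2508.18392 — 7 statements merged into one kernel-verified Lean document; each statement's English description precedes it below -/
import Mathlib

section
/- Let L be a finite nonempty index set, and for each ℓ ∈ L let q_ℓ > 0 and δ_ℓ ≥ 0, and suppose M = max_{ℓ∈L} δ_ℓ/q_ℓ > 0. Then the function Ξ(ζ) = Σ_{ℓ∈L} P_{[0,δ_ℓ]}(q_ℓ·(1−ζ)) is strictly decreasing on the interval [1 − M, 1]; that is, for all ζ₁ < ζ₂ in [1 − M, 1], Ξ(ζ₁) > Ξ(ζ₂). -/
/-- The clamp (projection) of `x` onto the interval `[a, b]`. -/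
noncomputable def clamp (a b x : ℝ) : ℝ := max a (min b x)

/-!
Pick `ℓ₀` attaining `M = δ ℓ₀ / q ℓ₀`. On `[1 - M, 1]` the argument `q ℓ₀ * (1 - ζ)` stays inside
`[0, δ ℓ₀]`, where the clamp is the identity, so the `ℓ₀`-th summand is strictly decreasing in `ζ`;
every other summand is a monotone clamp of a decreasing function, hence non-increasing.
-/

lemma clamp_mono (a b : ℝ) : Monotone (clamp a b) :=
  fun _ _ h => max_le_max le_rfl (min_le_min le_rfl h)

lemma clamp_le_self {a b x : ℝ} (hx : a ≤ x) : clamp a b x ≤ x :=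
  max_le hx (min_le_right _ _)

lemma clamp_eq_self {a b x : ℝ} (hax : a ≤ x) (hxb : x ≤ b) : clamp a b x = x := by
  rw [clamp, min_eq_right hxb, max_eq_right hax]

lemma clamp_lt_clamp {a b x y : ℝ} (hx : a ≤ x) (hxy : x < y) (hy : y ≤ b) :
    clamp a b x < clamp a b y :=
  calc clamp a b x ≤ x := clamp_le_self hx
    _ < y := hxy
    _ = clamp a b y := (clamp_eq_self (hx.trans hxy.le) hy).symm

theorem stmt1_general {L : Type*} [Fintype L] [Nonempty L]
    (q δ : L → ℝ) (hq : ∀ ℓ, 0 < q ℓ) :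
    ∀ ζ₁ ζ₂ : ℝ,
      1 - Finset.univ.sup' Finset.univ_nonempty (fun ℓ => δ ℓ / q ℓ) ≤ ζ₁ → ζ₁ < ζ₂ → ζ₂ ≤ 1 →
      (∑ ℓ, clamp 0 (δ ℓ) (q ℓ * (1 - ζ₂))) < ∑ ℓ, clamp 0 (δ ℓ) (q ℓ * (1 - ζ₁)) := by
  intro ζ₁ ζ₂ hζ₁ hlt hζ₂
  obtain ⟨ℓ₀, -, hℓ₀⟩ := Finset.exists_mem_eq_sup' Finset.univ_nonempty (fun ℓ => δ ℓ / q ℓ)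
  rw [hℓ₀] at hζ₁
  have hq₀ := hq ℓ₀
  refine Finset.sum_lt_sum
    (fun ℓ _ => clamp_mono _ _ (mul_le_mul_of_nonneg_left (by linarith) (hq ℓ).le))
    ⟨ℓ₀, Finset.mem_univ ℓ₀, clamp_lt_clamp ?_ ?_ ?_⟩
  · exact mul_nonneg hq₀.le (by linarith)
  · exact mul_lt_mul_of_pos_left (by linarith) hq₀
  · exact (le_div_iff₀' hq₀).mp (by linarith)

/-- If `M = max_ℓ δ ℓ / q ℓ > 0`, then
`Ξ ζ = ∑ ℓ, P_{[0, δ ℓ]} (q ℓ * (1 - ζ))` is strictly decreasing on `[1 - M, 1]`. -/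
theorem stmt1 {L : Type*} [Fintype L] [Nonempty L]
    (q δ : L → ℝ) (hq : ∀ ℓ, 0 < q ℓ) (hδ : ∀ ℓ, 0 ≤ δ ℓ)
    (hM : 0 < Finset.univ.sup' Finset.univ_nonempty (fun ℓ => δ ℓ / q ℓ)) :
    ∀ ζ₁ ζ₂ : ℝ,
      1 - Finset.univ.sup' Finset.univ_nonempty (fun ℓ => δ ℓ / q ℓ) ≤ ζ₁ → ζ₁ < ζ₂ → ζ₂ ≤ 1 →
      (∑ ℓ, clamp 0 (δ ℓ) (q ℓ * (1 - ζ₂))) < ∑ ℓ, clamp 0 (δ ℓ) (q ℓ * (1 - ζ₁)) :=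
  stmt1_general q δ hq
end

section
/- Let L be a finite nonempty index set, for each ℓ ∈ L let q_ℓ > 0 and δ_ℓ ≥ 0, and let ℓ* ∈ L attain M = max_{ℓ∈L} δ_ℓ/q_ℓ > 0. For y ∈ [0, Σ_{ℓ∈L} δ_ℓ], let ζ(y) denote the unique point of [1 − M, 1] with Ξ(ζ(y)) = y, where Ξ(ζ) = Σ_{ℓ∈L} P_{[0,δ_ℓ]}(q_ℓ·(1−ζ)). Then the map y ↦ ζ(y) is Lipschitz continuous on [0, Σ_{ℓ∈L} δ_ℓ] with Lipschitz constant 1/q_{ℓ*}; that is, |ζ(y₁) − ζ(y₂)| ≤ |y₁ − y₂| / q_{ℓ*} for all y₁, y₂ in this interval. -/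
lemma clamp_of_mem_Icc {a b x : ℝ} (h : x ∈ Set.Icc a b) : clamp a b x = x := by
  rw [clamp, min_eq_right h.2, max_eq_right h.1]

lemma abs_sub_le_abs_sub_div_of_decrease_rate {f : ℝ → ℝ} {S : Set ℝ} {c : ℝ} (hc : 0 < c)
    (hf : ∀ a ∈ S, ∀ b ∈ S, a ≤ b → c * (b - a) ≤ f a - f b)
    {a b : ℝ} (ha : a ∈ S) (hb : b ∈ S) : |a - b| ≤ |f a - f b| / c := by
  rw [le_div_iff₀ hc]
  rcases le_total a b with hab | hab
  · calc |a - b| * c = c * (b - a) := by rw [abs_sub_comm, abs_of_nonneg (by linarith)]; ring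
      _ ≤ f a - f b := hf a ha b hb hab
      _ ≤ |f a - f b| := le_abs_self _
  · calc |a - b| * c = c * (a - b) := by rw [abs_of_nonneg (by linarith)]; ring
      _ ≤ f b - f a := hf b hb a ha hab
      _ ≤ |f a - f b| := by rw [abs_sub_comm]; exact le_abs_self _

lemma mul_sub_le_sum_clamp_sub {L : Type*} [Fintype L] (q δ : L → ℝ) (hq : ∀ ℓ, 0 < q ℓ)
    (ℓ₀ : L) {z₁ z₂ : ℝ} (hz₁ : 1 - δ ℓ₀ / q ℓ₀ ≤ z₁) (hz₂ : z₂ ≤ 1) (h : z₁ ≤ z₂) :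
    q ℓ₀ * (z₂ - z₁) ≤
      ∑ ℓ, clamp 0 (δ ℓ) (q ℓ * (1 - z₁)) - ∑ ℓ, clamp 0 (δ ℓ) (q ℓ * (1 - z₂)) := by
  have unclamped : ∀ z ∈ Set.Icc z₁ z₂,
      clamp 0 (δ ℓ₀) (q ℓ₀ * (1 - z)) = q ℓ₀ * (1 - z) := fun z hz => by
    have hδ : q ℓ₀ * (δ ℓ₀ / q ℓ₀) = δ ℓ₀ := mul_div_cancel₀ _ (hq ℓ₀).ne'
    apply clamp_of_mem_Icc
    constructor <;> nlinarith [hq ℓ₀, hz.1, hz.2]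
  rw [← Finset.sum_sub_distrib]
  calc q ℓ₀ * (z₂ - z₁)
      = clamp 0 (δ ℓ₀) (q ℓ₀ * (1 - z₁)) - clamp 0 (δ ℓ₀) (q ℓ₀ * (1 - z₂)) := by
        rw [unclamped z₁ ⟨le_rfl, h⟩, unclamped z₂ ⟨h, le_rfl⟩]; ring
    _ ≤ ∑ ℓ, (clamp 0 (δ ℓ) (q ℓ * (1 - z₁)) - clamp 0 (δ ℓ) (q ℓ * (1 - z₂))) := by
        refine Finset.single_le_sum
          (f := fun ℓ => clamp 0 (δ ℓ) (q ℓ * (1 - z₁)) - clamp 0 (δ ℓ) (q ℓ * (1 - z₂)))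
          (fun ℓ _ => sub_nonneg.2 (clamp_mono 0 (δ ℓ) ?_)) (Finset.mem_univ ℓ₀)
        exact mul_le_mul_of_nonneg_left (by linarith) (hq ℓ).le

theorem stmt3_general {L : Type*} [Fintype L]
    (q δ : L → ℝ) (hq : ∀ ℓ, 0 < q ℓ)
    (ℓstar : L)
    (ζ : ℝ → ℝ)
    (hζ : ∀ y ∈ Set.Icc (0 : ℝ) (∑ ℓ, δ ℓ),
      ζ y ∈ Set.Icc (1 - δ ℓstar / q ℓstar) 1 ∧
      (∑ ℓ, clamp 0 (δ ℓ) (q ℓ * (1 - ζ y))) = y) :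
    ∀ y₁ ∈ Set.Icc (0 : ℝ) (∑ ℓ, δ ℓ), ∀ y₂ ∈ Set.Icc (0 : ℝ) (∑ ℓ, δ ℓ),
      |ζ y₁ - ζ y₂| ≤ |y₁ - y₂| / q ℓstar := by
  intro y₁ hy₁ y₂ hy₂
  obtain ⟨hζ₁, hΞ₁⟩ := hζ y₁ hy₁
  obtain ⟨hζ₂, hΞ₂⟩ := hζ y₂ hy₂
  have h := abs_sub_le_abs_sub_div_of_decrease_rate (hq ℓstar)
    (fun a ha b hb hab => mul_sub_le_sum_clamp_sub q δ hq ℓstar ha.1 hb.2 hab) hζ₁ hζ₂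
  rwa [hΞ₁, hΞ₂] at h

/-- Let `ℓ*` attain `M = max_ℓ δ ℓ / q ℓ > 0`, and for each
`y ∈ [0, ∑ ℓ, δ ℓ]` let `ζ y` be the unique point of `[1 - M, 1]` with `Ξ (ζ y) = y`.
Then `y ↦ ζ y` is Lipschitz on `[0, ∑ ℓ, δ ℓ]` with constant `1 / q ℓ*`. -/
theorem stmt3 {L : Type*} [Fintype L] [Nonempty L]
    (q δ : L → ℝ) (hq : ∀ ℓ, 0 < q ℓ) (hδ : ∀ ℓ, 0 ≤ δ ℓ)
    (ℓstar : L) (hmax : ∀ ℓ, δ ℓ / q ℓ ≤ δ ℓstar / q ℓstar)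
    (hMpos : 0 < δ ℓstar / q ℓstar)
    (ζ : ℝ → ℝ)
    (hζ : ∀ y ∈ Set.Icc (0 : ℝ) (∑ ℓ, δ ℓ),
      ζ y ∈ Set.Icc (1 - δ ℓstar / q ℓstar) 1 ∧
      (∑ ℓ, clamp 0 (δ ℓ) (q ℓ * (1 - ζ y))) = y) :
    ∀ y₁ ∈ Set.Icc (0 : ℝ) (∑ ℓ, δ ℓ), ∀ y₂ ∈ Set.Icc (0 : ℝ) (∑ ℓ, δ ℓ),
      |ζ y₁ - ζ y₂| ≤ |y₁ - y₂| / q ℓstar :=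
  stmt3_general q δ hq ℓstar ζ hζ
end

section
/- Let L be a finite nonempty index set, for each ℓ ∈ L let q_ℓ > 0 and 0 ≤ δ_ℓ ≤ q_ℓ with M = max_{ℓ∈L} δ_ℓ/q_ℓ > 0, and let σ ≥ 0. Consider the problem of maximizing Z(q) = Σ_{ℓ∈L} (q_ℓ' − (q_ℓ')²/(2 q_ℓ)) over vectors q' = (q_ℓ')_{ℓ∈L} subject to 0 ≤ q_ℓ' ≤ δ_ℓ for all ℓ and Σ_{ℓ∈L} q_ℓ' ≤ σ. Then this problem has a unique maximizer q*, the maximizer satisfies Σ_{ℓ∈L} q*_ℓ = min(σ, Σ_{ℓ∈L} δ_ℓ), and q*_ℓ = P_{[0,δ_ℓ]}(q_ℓ·(1−ζ*)) for all ℓ, where ζ* is the unique point of [1 − M, 1] satisfying Σ_{ℓ∈L} P_{[0,δ_ℓ]}(q_ℓ·(1−ζ*)) = min(σ, Σ_{ℓ∈L} δ_ℓ). -/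
/-- The feasible set of the merge flow-optimisation problem: box constraints `0 ≤ q' ℓ ≤ δ ℓ`
and the aggregate supply constraint `∑ ℓ, q' ℓ ≤ σ`. -/
def feasSet {L : Type*} [Fintype L] (δ : L → ℝ) (σ : ℝ) : Set (L → ℝ) :=
  {q' | (∀ ℓ, 0 ≤ q' ℓ ∧ q' ℓ ≤ δ ℓ) ∧ (∑ ℓ, q' ℓ) ≤ σ}

/-- The strictly concave quadratic objective of the flow-optimisation merge model. -/
noncomputable def mergeObj {L : Type*} [Fintype L] (q : L → ℝ) (q' : L → ℝ) : ℝ :=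
  ∑ ℓ, (q' ℓ - (q' ℓ) ^ 2 / (2 * q ℓ))

/-!
The maximizer is certified by a Lagrangian bound. For `x ℓ = P_{[0,δ ℓ]}(q ℓ (1 - ζ))` and any
`t ≤ δ ℓ`, the coordinate objective satisfies the exact quadratic KKT inequality
`t - t²/2q ≤ x - x²/2q + ζ (t - x) - (t - x)²/2q`, because `1 - x/q` equals `ζ` where the clamp
is inactive and exceeds `ζ` where it is active at `δ ℓ`. Summing, and using `ζ ≥ 0` together
with `∑ y ≤ min σ (∑ δ) = ∑ x` for feasible `y`, gives `Z(y) + ∑ (y - x)²/2q ≤ Z(x)`, which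
yields both optimality of `x` and, by strict positivity of the quadratic defect, its uniqueness.
-/

open Finset

lemma clamp_mem_Icc {a b : ℝ} (hab : a ≤ b) (x : ℝ) : clamp a b x ∈ Set.Icc a b :=
  ⟨le_max_left _ _, max_le hab (min_le_left _ _)⟩

lemma clamp_zero_eq_min {b x : ℝ} (hb : 0 ≤ b) (hx : 0 ≤ x) : clamp 0 b x = min b x :=
  max_eq_right (le_min hb hx)

lemma sub_sq_div_add_le_clamp {a d z t : ℝ} (ha : 0 < a) (hd : 0 ≤ d) (hz : z ≤ 1) (ht : t ≤ d) :
    let x := clamp 0 d (a * (1 - z))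
    t - t ^ 2 / (2 * a) + (t - x) ^ 2 / (2 * a) ≤ x - x ^ 2 / (2 * a) + z * (t - x) := by
  intro x
  have hx : x = min d (a * (1 - z)) := clamp_zero_eq_min hd (by nlinarith)
  rw [hx]
  rcases min_cases d (a * (1 - z)) with ⟨hmin, hle⟩ | ⟨hmin, -⟩ <;> rw [hmin, ← sub_nonneg]
  · have hgap : d - d ^ 2 / (2 * a) + z * (t - d) - (t - t ^ 2 / (2 * a) + (t - d) ^ 2 / (2 * a))
        = (a * (1 - z) - d) * (d - t) / a := by
      field_simp
      ring
    rw [hgap]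
    exact div_nonneg (mul_nonneg (by linarith) (by linarith)) ha.le
  · apply le_of_eq
    field_simp
    ring

section
variable {L : Type*} [Fintype L]

noncomputable def clampFlow (q δ : L → ℝ) (ζ : ℝ) : L → ℝ :=
  fun ℓ => clamp 0 (δ ℓ) (q ℓ * (1 - ζ))

lemma sum_le_min_of_mem_feasSet {δ y : L → ℝ} {σ : ℝ} (hy : y ∈ feasSet δ σ) :
    ∑ ℓ, y ℓ ≤ min σ (∑ ℓ, δ ℓ) :=
  le_min hy.2 (sum_le_sum fun ℓ _ => (hy.1 ℓ).2)

lemma clampFlow_mem_feasSet {q δ : L → ℝ} {σ ζ : ℝ} (hδ : ∀ ℓ, 0 ≤ δ ℓ)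
    (hsum : ∑ ℓ, clampFlow q δ ζ ℓ = min σ (∑ ℓ, δ ℓ)) : clampFlow q δ ζ ∈ feasSet δ σ :=
  ⟨fun ℓ => clamp_mem_Icc (hδ ℓ) _, hsum ▸ min_le_left _ _⟩

lemma mergeObj_add_sum_sq_le {q δ y : L → ℝ} {ζ : ℝ} (hq : ∀ ℓ, 0 < q ℓ) (hδ : ∀ ℓ, 0 ≤ δ ℓ)
    (hζ : ζ ≤ 1) (hy : ∀ ℓ, y ℓ ≤ δ ℓ) :
    mergeObj q y + ∑ ℓ, (y ℓ - clampFlow q δ ζ ℓ) ^ 2 / (2 * q ℓ)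
      ≤ mergeObj q (clampFlow q δ ζ) + ζ * (∑ ℓ, y ℓ - ∑ ℓ, clampFlow q δ ζ ℓ) := by
  rw [← sum_sub_distrib, mul_sum, mergeObj, mergeObj, ← sum_add_distrib, ← sum_add_distrib]
  exact sum_le_sum fun ℓ _ => sub_sq_div_add_le_clamp (hq ℓ) (hδ ℓ) hζ (hy ℓ)

lemma mergeObj_add_sum_sq_le_of_mem_feasSet {q δ y : L → ℝ} {σ ζ : ℝ} (hq : ∀ ℓ, 0 < q ℓ)
    (hδ : ∀ ℓ, 0 ≤ δ ℓ) (hζ₀ : 0 ≤ ζ) (hζ₁ : ζ ≤ 1)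
    (hsum : ∑ ℓ, clampFlow q δ ζ ℓ = min σ (∑ ℓ, δ ℓ)) (hy : y ∈ feasSet δ σ) :
    mergeObj q y + ∑ ℓ, (y ℓ - clampFlow q δ ζ ℓ) ^ 2 / (2 * q ℓ)
      ≤ mergeObj q (clampFlow q δ ζ) := by
  have hle := mergeObj_add_sum_sq_le hq hδ hζ₁ fun ℓ => (hy.1 ℓ).2
  have hsum_le : ∑ ℓ, y ℓ ≤ ∑ ℓ, clampFlow q δ ζ ℓ := hsum ▸ sum_le_min_of_mem_feasSet hy
  nlinarith [mul_nonneg hζ₀ (sub_nonneg.mpr hsum_le)]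

lemma sum_sq_div_nonneg {q u v : L → ℝ} (hq : ∀ ℓ, 0 < q ℓ) :
    0 ≤ ∑ ℓ, (u ℓ - v ℓ) ^ 2 / (2 * q ℓ) :=
  sum_nonneg fun ℓ _ => div_nonneg (sq_nonneg _) (by linarith [hq ℓ])

lemma eq_of_sum_sq_div_nonpos {q u v : L → ℝ} (hq : ∀ ℓ, 0 < q ℓ)
    (h : ∑ ℓ, (u ℓ - v ℓ) ^ 2 / (2 * q ℓ) ≤ 0) : u = v := by
  have hzero := (sum_eq_zero_iff_of_nonneg fun ℓ _ =>
    div_nonneg (sq_nonneg (u ℓ - v ℓ)) (by linarith [hq ℓ])).mp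
    (le_antisymm h (sum_sq_div_nonneg hq))
  funext ℓ
  have hterm := hzero ℓ (mem_univ ℓ)
  rw [div_eq_zero_iff, sq_eq_zero_iff, sub_eq_zero] at hterm
  exact hterm.resolve_right (by linarith [hq ℓ])

end

theorem stmt5_general {L : Type*} [Fintype L] [Nonempty L]
    (q δ : L → ℝ) (hq : ∀ ℓ, 0 < q ℓ) (hδ0 : ∀ ℓ, 0 ≤ δ ℓ) (hδq : ∀ ℓ, δ ℓ ≤ q ℓ)
    (σ : ℝ)
    (ζstar : ℝ)
    (hζmem : ζstar ∈
      Set.Icc (1 - Finset.univ.sup' Finset.univ_nonempty (fun ℓ => δ ℓ / q ℓ)) 1)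
    (hζeq : (∑ ℓ, clamp 0 (δ ℓ) (q ℓ * (1 - ζstar))) = min σ (∑ ℓ, δ ℓ)) :
    (fun ℓ => clamp 0 (δ ℓ) (q ℓ * (1 - ζstar))) ∈ feasSet δ σ ∧
    IsMaxOn (mergeObj q) (feasSet δ σ) (fun ℓ => clamp 0 (δ ℓ) (q ℓ * (1 - ζstar))) ∧
    (∑ ℓ, clamp 0 (δ ℓ) (q ℓ * (1 - ζstar))) = min σ (∑ ℓ, δ ℓ) ∧
    ∀ q' ∈ feasSet δ σ, IsMaxOn (mergeObj q) (feasSet δ σ) q' →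
      q' = fun ℓ => clamp 0 (δ ℓ) (q ℓ * (1 - ζstar)) := by
  show clampFlow q δ ζstar ∈ _ ∧ IsMaxOn _ _ (clampFlow q δ ζstar) ∧ _ ∧
    ∀ q' ∈ _, _ → q' = clampFlow q δ ζstar
  have hM_le_one : univ.sup' univ_nonempty (fun ℓ => δ ℓ / q ℓ) ≤ 1 :=
    sup'_le _ _ fun ℓ _ => (div_le_one (hq ℓ)).mpr (hδq ℓ)
  have hζ₀ : 0 ≤ ζstar := by linarith [hζmem.1]
  have hbound := fun y (hy : y ∈ feasSet δ σ) =>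
    mergeObj_add_sum_sq_le_of_mem_feasSet hq hδ0 hζ₀ hζmem.2 hζeq hy
  have hfeas : clampFlow q δ ζstar ∈ feasSet δ σ := clampFlow_mem_feasSet hδ0 hζeq
  have hmax : IsMaxOn (mergeObj q) (feasSet δ σ) (clampFlow q δ ζstar) :=
    isMaxOn_iff.mpr fun y hy => by
      linarith [hbound y hy, sum_sq_div_nonneg hq (u := y) (v := clampFlow q δ ζstar)]
  refine ⟨hfeas, hmax, hζeq, fun q' hq' hmax' => eq_of_sum_sq_div_nonpos hq ?_⟩
  linarith [hbound q' hq', isMaxOn_iff.mp hmax' _ hfeas]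

/-- The flow-optimisation merge problem has a unique maximizer `q*`;
it satisfies `∑ ℓ, q* ℓ = min σ (∑ ℓ, δ ℓ)` and `q* ℓ = P_{[0,δ ℓ]}(q ℓ · (1 - ζ*))`,
where `ζ*` is the unique point of `[1 - M, 1]` with
`∑ ℓ, P_{[0,δ ℓ]}(q ℓ · (1 - ζ*)) = min σ (∑ ℓ, δ ℓ)`. -/
theorem stmt5 {L : Type*} [Fintype L] [Nonempty L]
    (q δ : L → ℝ) (hq : ∀ ℓ, 0 < q ℓ) (hδ0 : ∀ ℓ, 0 ≤ δ ℓ) (hδq : ∀ ℓ, δ ℓ ≤ q ℓ)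
    (hM : 0 < Finset.univ.sup' Finset.univ_nonempty (fun ℓ => δ ℓ / q ℓ))
    (σ : ℝ) (hσ : 0 ≤ σ)
    (ζstar : ℝ)
    (hζmem : ζstar ∈
      Set.Icc (1 - Finset.univ.sup' Finset.univ_nonempty (fun ℓ => δ ℓ / q ℓ)) 1)
    (hζeq : (∑ ℓ, clamp 0 (δ ℓ) (q ℓ * (1 - ζstar))) = min σ (∑ ℓ, δ ℓ)) :
    (fun ℓ => clamp 0 (δ ℓ) (q ℓ * (1 - ζstar))) ∈ feasSet δ σ ∧
    IsMaxOn (mergeObj q) (feasSet δ σ) (fun ℓ => clamp 0 (δ ℓ) (q ℓ * (1 - ζstar))) ∧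
    (∑ ℓ, clamp 0 (δ ℓ) (q ℓ * (1 - ζstar))) = min σ (∑ ℓ, δ ℓ) ∧
    ∀ q' ∈ feasSet δ σ, IsMaxOn (mergeObj q) (feasSet δ σ) q' →
      q' = fun ℓ => clamp 0 (δ ℓ) (q ℓ * (1 - ζstar)) :=
  stmt5_general q δ hq hδ0 hδq σ ζstar hζmem hζeq
end

section
/- Consider a merge with two inflows: let q₁, q₂ > 0 be the two maximum flows, let 0 ≤ δ₁ ≤ q₁ and 0 ≤ δ₂ ≤ q₂ be the two demands with δ₁ + δ₂ > 0, and let σ ≥ 0 be the downstream supply with σ ≤ δ₁ + δ₂. Let (q*₁, q*₂) be the unique maximizer of (q₁' − (q₁')²/(2q₁)) + (q₂' − (q₂')²/(2q₂)) over {0 ≤ q₁' ≤ δ₁, 0 ≤ q₂' ≤ δ₂, q₁' + q₂' ≤ σ}. Then, writing p_i = q_i/(q₁ + q₂), the maximizer is given by Daganzo's merge rule: q*₁ = min(δ₁, max(σ − δ₂, p₁·σ)) and q*₂ = min(δ₂, max(σ − δ₁, p₂·σ)). -/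
/-!
The objective is a separable, strictly concave quadratic, so for any feasible `y` and `x`
its increase from `y` to `x` is the gradient pairing `∇f(y) · (x - y)` minus a positive definite
square. Hence a feasible point at which that pairing is nonpositive for every feasible `x` is the
unique maximizer. Daganzo's point saturates the supply, and its marginal utilities `1 - y_i / q_i`
are nonnegative and either equal (both inflows get their proportional share) or larger on the
inflow that is held at its demand, which gives exactly this first-order condition.
-/

noncomputable section

namespace MergeModel

def utility (c x : ℝ) : ℝ := x - x ^ 2 / (2 * c)

def objective (q1 q2 a b : ℝ) : ℝ := utility q1 a + utility q2 b

def daganzoShare (qi qj δi δj σ : ℝ) : ℝ := min δi (max (σ - δj) (qi / (qi + qj) * σ))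

/-- The first-order optimality condition at `(y1, y2)` for maximizing `objective q1 q2` over
`{x1 ≤ δ1, x2 ≤ δ2, x1 + x2 ≤ σ}`, at a point that saturates the supply. -/
def IsFirstOrderOptimal (q1 q2 δ1 δ2 σ y1 y2 : ℝ) : Prop :=
  y1 + y2 = σ ∧ ∀ x1 x2, x1 ≤ δ1 → x2 ≤ δ2 → x1 + x2 ≤ σ →
    (1 - y1 / q1) * (x1 - y1) + (1 - y2 / q2) * (x2 - y2) ≤ 0

lemma utility_sub_utility {c : ℝ} (hc : c ≠ 0) (x y : ℝ) :
    utility c x - utility c y = (1 - y / c) * (x - y) - (x - y) ^ 2 / (2 * c) := by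
  unfold utility
  field_simp
  ring

lemma eq_of_objective_le {q1 q2 x1 x2 y1 y2 : ℝ} (hq1 : 0 < q1) (hq2 : 0 < q2)
    (hgrad : (1 - y1 / q1) * (x1 - y1) + (1 - y2 / q2) * (x2 - y2) ≤ 0)
    (hle : objective q1 q2 y1 y2 ≤ objective q1 q2 x1 x2) : x1 = y1 ∧ x2 = y2 := by
  have h1 := utility_sub_utility hq1.ne' x1 y1
  have h2 := utility_sub_utility hq2.ne' x2 y2
  have n1 : 0 ≤ (x1 - y1) ^ 2 / (2 * q1) := by positivity
  have n2 : 0 ≤ (x2 - y2) ^ 2 / (2 * q2) := by positivity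
  unfold objective at hle
  have z1 : (x1 - y1) ^ 2 / (2 * q1) = 0 := by linarith
  have z2 : (x2 - y2) ^ 2 / (2 * q2) = 0 := by linarith
  simp only [div_eq_zero_iff, pow_eq_zero_iff two_ne_zero, sub_eq_zero] at z1 z2
  exact ⟨z1.resolve_right (by positivity), z2.resolve_right (by positivity)⟩

lemma gradient_pairing_nonpos {g1 g2 x1 x2 y1 y2 σ : ℝ} (hg2 : 0 ≤ g2)
    (hg : (g1 - g2) * (x1 - y1) ≤ 0) (hx : x1 + x2 ≤ σ) (hy : y1 + y2 = σ) :
    g1 * (x1 - y1) + g2 * (x2 - y2) ≤ 0 := by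
  nlinarith [mul_nonneg hg2 (sub_nonneg.2 hx)]

lemma IsFirstOrderOptimal.swap {q1 q2 δ1 δ2 σ y1 y2 : ℝ}
    (h : IsFirstOrderOptimal q1 q2 δ1 δ2 σ y1 y2) : IsFirstOrderOptimal q2 q1 δ2 δ1 σ y2 y1 :=
  ⟨by rw [add_comm, h.1], fun x2 x1 hx2 hx1 hx => by
    rw [add_comm]; exact h.2 x1 x2 hx1 hx2 (by rwa [add_comm])⟩

section Daganzo

variable {q1 q2 δ1 δ2 σ : ℝ}

lemma proportional_shares_add (hq : 0 < q1 + q2) :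
    q1 / (q1 + q2) * σ + q2 / (q2 + q1) * σ = σ := by
  rw [add_comm q2]
  field_simp

lemma daganzoShare_nonneg (hδ1 : 0 ≤ δ1) (hq1 : 0 ≤ q1) (hq2 : 0 ≤ q2) (hσ : 0 ≤ σ) :
    0 ≤ daganzoShare q1 q2 δ1 δ2 σ :=
  le_min hδ1 ((by positivity : 0 ≤ q1 / (q1 + q2) * σ).trans (le_max_right _ _))

lemma daganzoShare_eq_proportional (hq : 0 < q1 + q2) (h1 : q1 / (q1 + q2) * σ ≤ δ1)
    (h2 : q2 / (q2 + q1) * σ ≤ δ2) : daganzoShare q1 q2 δ1 δ2 σ = q1 / (q1 + q2) * σ := by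
  have := proportional_shares_add (σ := σ) hq
  rw [daganzoShare, max_eq_right (by linarith), min_eq_right h1]

lemma daganzoShare_of_demand_lt (hq : 0 < q1 + q2) (hσ : σ ≤ δ1 + δ2)
    (h : δ1 < q1 / (q1 + q2) * σ) :
    daganzoShare q1 q2 δ1 δ2 σ = δ1 ∧ daganzoShare q2 q1 δ2 δ1 σ = σ - δ1 := by
  have := proportional_shares_add (σ := σ) hq
  refine ⟨min_eq_left (h.le.trans (le_max_right _ _)), ?_⟩
  rw [daganzoShare, max_eq_left (by linarith), min_eq_right (by linarith)]

lemma isFirstOrderOptimal_of_demand_lt (hq1 : 0 < q1) (hq2 : 0 < q2) (hδ2q : δ2 ≤ q2)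
    (hσ : σ ≤ δ1 + δ2) (h : δ1 < q1 / (q1 + q2) * σ) :
    IsFirstOrderOptimal q1 q2 δ1 δ2 σ
      (daganzoShare q1 q2 δ1 δ2 σ) (daganzoShare q2 q1 δ2 δ1 σ) := by
  obtain ⟨hA, hB⟩ := daganzoShare_of_demand_lt (by positivity) hσ h
  rw [hA, hB]
  have hcross : δ1 * q2 < q1 * (σ - δ1) := by
    rw [div_mul_eq_mul_div, lt_div_iff₀ (by positivity)] at h
    linarith
  have hg : (1 - (σ - δ1) / q2) ≤ 1 - δ1 / q1 := by
    rw [sub_le_sub_iff_left, div_le_div_iff₀ hq1 hq2]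
    linarith
  have hg2 : 0 ≤ 1 - (σ - δ1) / q2 := by
    rw [sub_nonneg, div_le_one hq2]
    linarith
  refine ⟨by ring, fun x1 x2 hx1 _ hx => gradient_pairing_nonpos hg2 ?_ hx (by ring)⟩
  exact mul_nonpos_of_nonneg_of_nonpos (sub_nonneg.2 hg) (sub_nonpos.2 hx1)

lemma isFirstOrderOptimal_of_proportional (hq1 : 0 < q1) (hq2 : 0 < q2) (hδ1q : δ1 ≤ q1)
    (hδ2q : δ2 ≤ q2) (hσ : σ ≤ δ1 + δ2) (h1 : q1 / (q1 + q2) * σ ≤ δ1)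
    (h2 : q2 / (q2 + q1) * σ ≤ δ2) :
    IsFirstOrderOptimal q1 q2 δ1 δ2 σ
      (daganzoShare q1 q2 δ1 δ2 σ) (daganzoShare q2 q1 δ2 δ1 σ) := by
  have hq : 0 < q1 + q2 := by positivity
  rw [daganzoShare_eq_proportional hq h1 h2,
    daganzoShare_eq_proportional (by rwa [add_comm]) h2 h1]
  have hg1 : 1 - q1 / (q1 + q2) * σ / q1 = 1 - σ / (q1 + q2) := by field_simp
  have hg2 : 1 - q2 / (q2 + q1) * σ / q2 = 1 - σ / (q1 + q2) := by
    rw [add_comm q2]; field_simp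
  have hg : 0 ≤ 1 - σ / (q1 + q2) := by
    rw [sub_nonneg, div_le_one hq]
    linarith
  refine ⟨proportional_shares_add hq, fun x1 x2 _ _ hx => ?_⟩
  rw [hg1, hg2]
  exact gradient_pairing_nonpos hg (by simp) hx (proportional_shares_add hq)

lemma isFirstOrderOptimal_daganzoShare (hq1 : 0 < q1) (hq2 : 0 < q2) (hδ1q : δ1 ≤ q1)
    (hδ2q : δ2 ≤ q2) (hσ : σ ≤ δ1 + δ2) :
    IsFirstOrderOptimal q1 q2 δ1 δ2 σ
      (daganzoShare q1 q2 δ1 δ2 σ) (daganzoShare q2 q1 δ2 δ1 σ) := by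
  rcases lt_or_ge δ1 (q1 / (q1 + q2) * σ) with h1 | h1
  · exact isFirstOrderOptimal_of_demand_lt hq1 hq2 hδ2q hσ h1
  rcases lt_or_ge δ2 (q2 / (q2 + q1) * σ) with h2 | h2
  · exact (isFirstOrderOptimal_of_demand_lt hq2 hq1 hδ1q (by rwa [add_comm]) h2).swap
  · exact isFirstOrderOptimal_of_proportional hq1 hq2 hδ1q hδ2q hσ h1 h2

end Daganzo

end MergeModel

end

open MergeModel in
theorem stmt6_general (q1 q2 δ1 δ2 σ qs1 qs2 : ℝ)
    (hq1 : 0 < q1) (hq2 : 0 < q2)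
    (hδ1 : 0 ≤ δ1) (hδ1q : δ1 ≤ q1) (hδ2 : 0 ≤ δ2) (hδ2q : δ2 ≤ q2)
    (hσ0 : 0 ≤ σ) (hσle : σ ≤ δ1 + δ2)
    (hfeas : 0 ≤ qs1 ∧ qs1 ≤ δ1 ∧ 0 ≤ qs2 ∧ qs2 ≤ δ2 ∧ qs1 + qs2 ≤ σ)
    (hmax : ∀ a b : ℝ, 0 ≤ a → a ≤ δ1 → 0 ≤ b → b ≤ δ2 → a + b ≤ σ →
      (a - a ^ 2 / (2 * q1)) + (b - b ^ 2 / (2 * q2)) ≤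
        (qs1 - qs1 ^ 2 / (2 * q1)) + (qs2 - qs2 ^ 2 / (2 * q2))) :
    qs1 = min δ1 (max (σ - δ2) (q1 / (q1 + q2) * σ)) ∧
    qs2 = min δ2 (max (σ - δ1) (q2 / (q1 + q2) * σ)) := by
  obtain ⟨-, hx1, -, hx2, hsum⟩ := hfeas
  obtain ⟨hAB, hopt⟩ := isFirstOrderOptimal_daganzoShare hq1 hq2 hδ1q hδ2q hσle
  have hle : objective q1 q2 (daganzoShare q1 q2 δ1 δ2 σ) (daganzoShare q2 q1 δ2 δ1 σ) ≤
      objective q1 q2 qs1 qs2 :=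
    hmax _ _ (daganzoShare_nonneg hδ1 hq1.le hq2.le hσ0) (min_le_left _ _)
      (daganzoShare_nonneg hδ2 hq2.le hq1.le hσ0) (min_le_left _ _) hAB.le
  have := eq_of_objective_le hq1 hq2 (hopt qs1 qs2 hx1 hx2 hsum) hle
  rwa [daganzoShare, daganzoShare, add_comm q2] at this

/-- For a merge with two inflows of capacities `q1, q2 > 0`, demands
`0 ≤ δ1 ≤ q1`, `0 ≤ δ2 ≤ q2` with `δ1 + δ2 > 0`, and downstream supply `0 ≤ σ ≤ δ1 + δ2`,
the unique maximizer `(qs1, qs2)` of the concave quadratic objective over the feasible set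
is given by Daganzo's merge rule with `p_i = q_i / (q1 + q2)`. -/
theorem stmt6 (q1 q2 δ1 δ2 σ qs1 qs2 : ℝ)
    (hq1 : 0 < q1) (hq2 : 0 < q2)
    (hδ1 : 0 ≤ δ1) (hδ1q : δ1 ≤ q1) (hδ2 : 0 ≤ δ2) (hδ2q : δ2 ≤ q2)
    (hδpos : 0 < δ1 + δ2) (hσ0 : 0 ≤ σ) (hσle : σ ≤ δ1 + δ2)
    (hfeas : 0 ≤ qs1 ∧ qs1 ≤ δ1 ∧ 0 ≤ qs2 ∧ qs2 ≤ δ2 ∧ qs1 + qs2 ≤ σ)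
    (hmax : ∀ a b : ℝ, 0 ≤ a → a ≤ δ1 → 0 ≤ b → b ≤ δ2 → a + b ≤ σ →
      (a - a ^ 2 / (2 * q1)) + (b - b ^ 2 / (2 * q2)) ≤
        (qs1 - qs1 ^ 2 / (2 * q1)) + (qs2 - qs2 ^ 2 / (2 * q2))) :
    qs1 = min δ1 (max (σ - δ2) (q1 / (q1 + q2) * σ)) ∧
    qs2 = min δ2 (max (σ - δ1) (q2 / (q1 + q2) * σ)) :=
  stmt6_general q1 q2 δ1 δ2 σ qs1 qs2 hq1 hq2 hδ1 hδ1q hδ2 hδ2q hσ0 hσle hfeas hmax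
end

section
/- Let F ≥ 1, let g₁, …, g_F be real numbers, and let c > 0. Then there exists a unique real number ζ such that Σ_{j=1}^{F} max(0, g_j + ζ) = c. -/
/-!
The map `ζ ↦ ∑ j, max 0 (g j + ζ)` is continuous, vanishes for `ζ` below every `-g j`, and is at
least `c` at `ζ = c - g j₀`, so the intermediate value theorem gives a solution. Where the map is
positive some summand is positive, and that summand strictly increases with `ζ`; hence the map is
strictly increasing on the region where it is positive, which forces uniqueness for `c > 0`.
-/

open Finset

section ShiftedPosPartSum

variable {ι : Type*} [Fintype ι]

/-- `ξ(ζ)` of the paper. -/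
noncomputable def shiftedPosPartSum (g : ι → ℝ) (ζ : ℝ) : ℝ :=
  ∑ j, max 0 (g j + ζ)

variable (g : ι → ℝ)

theorem continuous_shiftedPosPartSum : Continuous (shiftedPosPartSum g) :=
  continuous_finsetSum _ fun _ _ => continuous_const.max (continuous_const.add continuous_id)

theorem shiftedPosPartSum_eq_zero_of_le {ζ : ℝ} (h : ∀ j, g j + ζ ≤ 0) :
    shiftedPosPartSum g ζ = 0 :=
  sum_eq_zero fun j _ => max_eq_left (h j)

theorem shiftedPosPartSum_neg_sum_abs :
    shiftedPosPartSum g (-∑ i, |g i|) = 0 := by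
  refine shiftedPosPartSum_eq_zero_of_le g fun j => ?_
  have : |g j| ≤ ∑ i, |g i| := single_le_sum (fun i _ => abs_nonneg (g i)) (mem_univ j)
  linarith [le_abs_self (g j)]

theorem le_shiftedPosPartSum_sub (j : ι) {c : ℝ} : c ≤ shiftedPosPartSum g (c - g j) :=
  calc c ≤ max 0 (g j + (c - g j)) := by simp
    _ ≤ shiftedPosPartSum g (c - g j) :=
      single_le_sum (f := fun i => max 0 (g i + (c - g j))) (fun _ _ => le_max_left _ _)
        (mem_univ j)

theorem shiftedPosPartSum_lt_of_pos {a b : ℝ} (hab : a < b) (hpos : 0 < shiftedPosPartSum g a) :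
    shiftedPosPartSum g a < shiftedPosPartSum g b := by
  obtain ⟨j, -, hj⟩ : ∃ j ∈ univ, 0 < g j + a := by
    by_contra! h
    exact hpos.ne' (shiftedPosPartSum_eq_zero_of_le g fun j => h j (mem_univ j))
  refine sum_lt_sum (fun i _ => max_le_max le_rfl (by linarith)) ⟨j, mem_univ j, ?_⟩
  rw [max_eq_right hj.le, max_eq_right (by linarith)]
  linarith

theorem eq_of_shiftedPosPartSum_eq {a b : ℝ} (h : shiftedPosPartSum g a = shiftedPosPartSum g b)
    (hpos : 0 < shiftedPosPartSum g a) : a = b := by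
  rcases lt_trichotomy a b with hab | hab | hab
  · exact absurd h (shiftedPosPartSum_lt_of_pos g hab hpos).ne
  · exact hab
  · exact absurd h (shiftedPosPartSum_lt_of_pos g hab (h ▸ hpos)).ne'

theorem exists_shiftedPosPartSum_eq [Nonempty ι] {c : ℝ} (hc : 0 ≤ c) :
    ∃ ζ, shiftedPosPartSum g ζ = c :=
  intermediate_value_univ _ _ (continuous_shiftedPosPartSum g)
    ⟨(shiftedPosPartSum_neg_sum_abs g).symm ▸ hc,
      le_shiftedPosPartSum_sub g (Classical.arbitrary ι)⟩

theorem existsUnique_shiftedPosPartSum_eq [Nonempty ι] {c : ℝ} (hc : 0 < c) :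
    ∃! ζ, shiftedPosPartSum g ζ = c := by
  obtain ⟨ζ, hζ⟩ := exists_shiftedPosPartSum_eq g hc.le
  exact ⟨ζ, hζ, fun y hy => eq_of_shiftedPosPartSum_eq g (hy.trans hζ.symm) (hy ▸ hc)⟩

end ShiftedPosPartSum

/-- For `F ≥ 1`, reals `g 1, …, g F`, and `c > 0`, there exists a unique real
`ζ` with `∑ j, max 0 (g j + ζ) = c`. -/
theorem stmt8 (F : ℕ) (hF : 1 ≤ F) (g : Fin F → ℝ) (c : ℝ) (hc : 0 < c) :
    ∃! ζ : ℝ, (∑ j, max 0 (g j + ζ)) = c := by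
  have : Nonempty (Fin F) := ⟨⟨0, hF⟩⟩
  exact existsUnique_shiftedPosPartSum_eq g hc
end

section
/- Let F ≥ 2 and let g₁ ≥ g₂ ≥ … ≥ g_F be real numbers (so the cut values −g₁ ≤ −g₂ ≤ … ≤ −g_F are in increasing order), and define ξ(ζ) = Σ_{j=1}^{F} max(0, g_j + ζ). Suppose ℓ ∈ {1, …, F−1} satisfies ξ(−g_ℓ) ≤ 1 < ξ(−g_{ℓ+1}). Then the number ζ* = −g_ℓ + (1 − ξ(−g_ℓ))/ℓ satisfies ξ(ζ*) = 1. -/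
/-! On `[-g ℓ, -g (ℓ+1)]` exactly the terms `j ≤ ℓ` of `ξ` are active, so `ξ ζ = ∑_{j ≤ ℓ} g j + ℓ ζ`
is affine with slope `ℓ` there. Since `ξ (-g ℓ) ≤ 1 < ξ (-g (ℓ+1))`, the root of `ξ ζ = 1` on that
piece lies inside it and is the point obtained by linear interpolation from `-g ℓ`. -/

open Finset

noncomputable def posPartSum (g : ℕ → ℝ) (F : ℕ) (ζ : ℝ) : ℝ :=
  ∑ j ∈ Icc 1 F, max 0 (g j + ζ)

lemma sum_max_zero_add_union {ι : Type*} [DecidableEq ι] {s t : Finset ι} (hst : Disjoint s t)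
    (g : ι → ℝ) {ζ : ℝ} (hs : ∀ j ∈ s, 0 ≤ g j + ζ) (ht : ∀ j ∈ t, g j + ζ ≤ 0) :
    ∑ j ∈ s ∪ t, max 0 (g j + ζ) = ∑ j ∈ s, g j + #s * ζ := by
  have hs' : ∑ j ∈ s, max 0 (g j + ζ) = ∑ j ∈ s, (g j + ζ) :=
    sum_congr rfl fun j hj => max_eq_right (hs j hj)
  have ht' : ∑ j ∈ t, max 0 (g j + ζ) = 0 :=
    sum_eq_zero fun j hj => max_eq_left (ht j hj)
  rw [sum_union hst, hs', ht', sum_add_distrib, sum_const, nsmul_eq_mul, add_zero]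

lemma posPartSum_eq_of_mem_Icc {g : ℕ → ℝ} {F ℓ : ℕ}
    (hsort : ∀ i j, 1 ≤ i → i ≤ j → j ≤ F → g j ≤ g i) (hℓF : ℓ + 1 ≤ F)
    {ζ : ℝ} (hζ : ζ ∈ Set.Icc (-g ℓ) (-g (ℓ + 1))) :
    posPartSum g F ζ = ∑ j ∈ Icc 1 ℓ, g j + ℓ * ζ := by
  have hsplit : Icc 1 F = Icc 1 ℓ ∪ Ioc ℓ F := by
    ext j; simp only [mem_union, mem_Icc, mem_Ioc]; omega
  have hdisj : Disjoint (Icc 1 ℓ) (Ioc ℓ F) :=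
    disjoint_left.2 fun j hj hj' => by rw [mem_Icc] at hj; rw [mem_Ioc] at hj'; omega
  rw [posPartSum, hsplit, sum_max_zero_add_union hdisj, Nat.card_Icc, Nat.add_sub_cancel]
  · intro j hj
    rw [mem_Icc] at hj
    linarith [hsort j ℓ hj.1 hj.2 (by omega), hζ.1]
  · intro j hj
    rw [mem_Ioc] at hj
    linarith [hsort (ℓ + 1) j (by omega) hj.1 hj.2, hζ.2]

theorem stmt10_general (F : ℕ) (g : ℕ → ℝ)
    (hsort : ∀ i j, 1 ≤ i → i ≤ j → j ≤ F → g j ≤ g i)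
    (ℓ : ℕ) (hℓ1 : 1 ≤ ℓ) (hℓF : ℓ + 1 ≤ F)
    (h1 : (∑ j ∈ Finset.Icc 1 F, max 0 (g j + (-(g ℓ)))) ≤ 1)
    (h2 : 1 < ∑ j ∈ Finset.Icc 1 F, max 0 (g j + (-(g (ℓ + 1))))) :
    (∑ j ∈ Finset.Icc 1 F,
        max 0 (g j + (-(g ℓ) + (1 - ∑ i ∈ Finset.Icc 1 F, max 0 (g i + (-(g ℓ)))) / ℓ))) = 1 := by
  change posPartSum g F (-g ℓ) ≤ 1 at h1
  change 1 < posPartSum g F (-g (ℓ + 1)) at h2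
  change posPartSum g F (-g ℓ + (1 - posPartSum g F (-g ℓ)) / ℓ) = 1
  have hℓ : (0 : ℝ) < ℓ := by exact_mod_cast hℓ1
  have hcuts : -g ℓ ≤ -g (ℓ + 1) := neg_le_neg (hsort ℓ (ℓ + 1) hℓ1 ℓ.le_succ hℓF)
  have hlo := posPartSum_eq_of_mem_Icc hsort hℓF ⟨le_rfl, hcuts⟩
  have hhi := posPartSum_eq_of_mem_Icc hsort hℓF ⟨hcuts, le_rfl⟩
  have hstep_nonneg : 0 ≤ (1 - posPartSum g F (-g ℓ)) / ℓ := div_nonneg (by linarith) hℓ.le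
  have hstep_le : (1 - posPartSum g F (-g ℓ)) / ℓ ≤ g ℓ - g (ℓ + 1) := by
    rw [div_le_iff₀ hℓ]; linarith
  rw [posPartSum_eq_of_mem_Icc hsort hℓF ⟨by linarith, by linarith⟩, mul_add,
    mul_div_cancel₀ _ hℓ.ne']
  linarith

/-- Let `F ≥ 2`, `g 1 ≥ g 2 ≥ … ≥ g F` (1-based indexing) and
`ξ ζ = ∑_{j=1}^{F} max 0 (g j + ζ)`. If `ℓ ∈ {1, …, F-1}` satisfies
`ξ (-g ℓ) ≤ 1 < ξ (-g (ℓ+1))`, then `ζ* = -g ℓ + (1 - ξ (-g ℓ)) / ℓ` satisfies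
`ξ ζ* = 1`. -/
theorem stmt10 (F : ℕ) (hF : 2 ≤ F) (g : ℕ → ℝ)
    (hsort : ∀ i j, 1 ≤ i → i ≤ j → j ≤ F → g j ≤ g i)
    (ℓ : ℕ) (hℓ1 : 1 ≤ ℓ) (hℓF : ℓ + 1 ≤ F)
    (h1 : (∑ j ∈ Finset.Icc 1 F, max 0 (g j + (-(g ℓ)))) ≤ 1)
    (h2 : 1 < ∑ j ∈ Finset.Icc 1 F, max 0 (g j + (-(g (ℓ + 1))))) :
    (∑ j ∈ Finset.Icc 1 F,
        max 0 (g j + (-(g ℓ) + (1 - ∑ i ∈ Finset.Icc 1 F, max 0 (g i + (-(g ℓ)))) / ℓ))) = 1 :=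
  stmt10_general F g hsort ℓ hℓ1 hℓF h1 h2
end

section
/- Let K ≥ 1, let X = ℝⁿ (state space) and B = ℝᵐ (control space). For k = 0, …, K−1 let E_k : X × B → X and g_k : X × B → ℝ be continuously differentiable, and let g_K : X → ℝ be continuously differentiable. Fix an initial state N₀ ∈ X, and for a control sequence β = (β₀, …, β_{K−1}) ∈ B^K define the trajectory by N_{k+1}(β) = E_k(N_k(β), β_k), and the cost J(β) = Σ_{k=0}^{K−1} g_k(N_k(β), β_k) + g_K(N_K(β)). Define the adjoint covectors (continuous linear functionals on X) by the backward recursion Υ_K = Dg_K(N_K), and Υ_k = D_N g_k(N_k, β_k) + Υ_{k+1} ∘ D_N E_k(N_k, β_k) for k = K−1, …, 0, where D_N denotes the partial Fréchet derivative in the state argument. Then for each k ∈ {0, …, K−1}, the map β_k ↦ J(β) (with the other controls held fixed) is differentiable and its Fréchet derivative at β_k equals D_β g_k(N_k, β_k) + Υ_{k+1} ∘ D_β E_k(N_k, β_k), where D_β denotes the partial Fréchet derivative in the control argument. -/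
/-- The state trajectory of the discrete-time control system `N_{k+1} = E_k (N_k, β_k)`
started from the initial state `N0`. -/
def traj {X B : Type*} (E : ℕ → X → B → X) (N0 : X) (β : ℕ → B) : ℕ → X
  | 0 => N0
  | k + 1 => E k (traj E N0 β k) (β k)

/-- The finite-horizon optimal control criterion: sum of stage costs plus terminal cost. -/
noncomputable def cost {X B : Type*} (K : ℕ) (E : ℕ → X → B → X)
    (g : ℕ → X → B → ℝ) (gK : X → ℝ) (N0 : X) (β : ℕ → B) : ℝ :=
  (∑ k ∈ Finset.range K, g k (traj E N0 β k) (β k)) + gK (traj E N0 β K)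

/-!
Let `V_l` be the cost-to-go from step `l`: the stage costs `g_l, …, g_{K-1}` plus the terminal
cost, as a function of the state at step `l`. It satisfies `V_K = g_K` and the dynamic
programming recursion `V_l x = g_l(x, β_l) + V_{l+1}(E_l(x, β_l))`; differentiating this
recursion along the trajectory by the chain rule gives exactly the backward recursion of the
adjoint, so `DV_l(N_l) = Υ_l`. Changing only the control `β_k` leaves `N_0, …, N_k` and the
controls after step `k` untouched, hence `J = const + g_k(N_k, β_k) + V_{k+1}(E_k(N_k, β_k))`
as a function of `β_k`, and one more application of the chain rule gives the formula.
-/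

open Finset

/-- `costToGo E g gK β r l x` is the cost of the last `r` steps, started at step `l` in state `x`. -/
noncomputable def costToGo {X B : Type*} (E : ℕ → X → B → X) (g : ℕ → X → B → ℝ)
    (gK : X → ℝ) (β : ℕ → B) : ℕ → ℕ → X → ℝ
  | 0, _, x => gK x
  | r + 1, l, x => g l x (β l) + costToGo E g gK β r (l + 1) (E l x (β l))

section CostToGo

variable {X B : Type*} (E : ℕ → X → B → X) (g : ℕ → X → B → ℝ) (gK : X → ℝ) (N0 : X)

theorem traj_update_of_le (β : ℕ → B) {k j : ℕ} (b : B) (hj : j ≤ k) :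
    traj E N0 (Function.update β k b) j = traj E N0 β j := by
  induction j with
  | zero => rfl
  | succ i ih =>
    simp only [traj, ih (by omega), Function.update_of_ne (show i ≠ k by omega)]

theorem costToGo_congr {β β' : ℕ → B} (r l : ℕ) (h : ∀ j ≥ l, β' j = β j) :
    costToGo E g gK β' r l = costToGo E g gK β r l := by
  induction r generalizing l with
  | zero => rfl
  | succ r ih =>
    funext x
    simp only [costToGo, h l le_rfl, ih (l + 1) fun j hj => h j (by omega)]

theorem sum_add_costToGo (β : ℕ → B) (r l : ℕ) :
    ∑ j ∈ range l, g j (traj E N0 β j) (β j) + costToGo E g gK β r l (traj E N0 β l) =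
      ∑ j ∈ range (l + r), g j (traj E N0 β j) (β j) + gK (traj E N0 β (l + r)) := by
  induction r generalizing l with
  | zero => rfl
  | succ r ih =>
    rw [costToGo, ← add_assoc, ← sum_range_succ, show l + (r + 1) = l + 1 + r by omega]
    exact ih (l + 1)

theorem cost_eq_sum_add_costToGo (β : ℕ → B) {K l : ℕ} (hl : l ≤ K) :
    cost K E g gK N0 β =
      ∑ j ∈ range l, g j (traj E N0 β j) (β j) + costToGo E g gK β (K - l) l (traj E N0 β l) := by
  rw [sum_add_costToGo, Nat.add_sub_cancel' hl, cost]

theorem cost_update (β : ℕ → B) {K k : ℕ} (hk : k < K) (b : B) :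
    cost K E g gK N0 (Function.update β k b) =
      ∑ j ∈ range k, g j (traj E N0 β j) (β j) +
        (g k (traj E N0 β k) b +
          costToGo E g gK β (K - (k + 1)) (k + 1) (E k (traj E N0 β k) b)) := by
  have hprefix : ∀ j ∈ range k, g j (traj E N0 (Function.update β k b) j)
      (Function.update β k b j) = g j (traj E N0 β j) (β j) := fun j hj => by
    have hjk := mem_range.mp hj
    rw [traj_update_of_le E N0 β b hjk.le, Function.update_of_ne hjk.ne]
  have hsuffix : ∀ j ≥ k + 1, Function.update β k b j = β j :=
    fun j hj => Function.update_of_ne (by omega) _ _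
  rw [cost_eq_sum_add_costToGo E g gK N0 _ (Nat.succ_le_of_lt hk), sum_range_succ,
    sum_congr rfl hprefix, costToGo_congr E g gK _ _ hsuffix, traj,
    traj_update_of_le E N0 β b le_rfl, Function.update_self, add_assoc]

end CostToGo

section Adjoint

variable {X B : Type*} [NormedAddCommGroup X] [NormedSpace ℝ X]
  [NormedAddCommGroup B] [NormedSpace ℝ B]

theorem hasFDerivAt_costToGo {K : ℕ} {E : ℕ → X → B → X} {g : ℕ → X → B → ℝ} {gK : X → ℝ}
    (hE : ∀ k < K, ContDiff ℝ 1 (fun p : X × B => E k p.1 p.2))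
    (hg : ∀ k < K, ContDiff ℝ 1 (fun p : X × B => g k p.1 p.2))
    (hgK : ContDiff ℝ 1 gK) (N0 : X) (β : ℕ → B) (Υ : ℕ → (X →L[ℝ] ℝ))
    (hΥK : Υ K = fderiv ℝ gK (traj E N0 β K))
    (hΥ : ∀ k < K, Υ k =
      fderiv ℝ (fun x => g k x (β k)) (traj E N0 β k) +
        (Υ (k + 1)).comp (fderiv ℝ (fun x => E k x (β k)) (traj E N0 β k)))
    (r l : ℕ) (hlr : l + r = K) :
    HasFDerivAt (costToGo E g gK β r l) (Υ l) (traj E N0 β l) := by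
  induction r generalizing l with
  | zero =>
    rw [Nat.add_zero] at hlr
    subst hlr
    rw [hΥK]
    exact (hgK.differentiable one_ne_zero _).hasFDerivAt
  | succ r ih =>
    have hl : l < K := by omega
    have hgl := hg l hl
    have hEl := hE l hl
    have hgx : Differentiable ℝ (fun x => g l x (β l)) := by fun_prop
    have hEx : Differentiable ℝ (fun x => E l x (β l)) := by fun_prop
    rw [hΥ l hl]
    exact (hgx _).hasFDerivAt.add
      ((ih (l + 1) (by omega)).comp (traj E N0 β l) (hEx _).hasFDerivAt)

end Adjoint

theorem stmt14_general (n m K : ℕ)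
    (E : ℕ → EuclideanSpace ℝ (Fin n) → EuclideanSpace ℝ (Fin m) → EuclideanSpace ℝ (Fin n))
    (g : ℕ → EuclideanSpace ℝ (Fin n) → EuclideanSpace ℝ (Fin m) → ℝ)
    (gK : EuclideanSpace ℝ (Fin n) → ℝ)
    (hE : ∀ k < K, ContDiff ℝ 1
      (fun p : EuclideanSpace ℝ (Fin n) × EuclideanSpace ℝ (Fin m) => E k p.1 p.2))
    (hg : ∀ k < K, ContDiff ℝ 1
      (fun p : EuclideanSpace ℝ (Fin n) × EuclideanSpace ℝ (Fin m) => g k p.1 p.2))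
    (hgK : ContDiff ℝ 1 gK)
    (N0 : EuclideanSpace ℝ (Fin n)) (β : ℕ → EuclideanSpace ℝ (Fin m))
    (Υ : ℕ → (EuclideanSpace ℝ (Fin n) →L[ℝ] ℝ))
    (hΥK : Υ K = fderiv ℝ gK (traj E N0 β K))
    (hΥ : ∀ k < K, Υ k =
      fderiv ℝ (fun x => g k x (β k)) (traj E N0 β k) +
        (Υ (k + 1)).comp (fderiv ℝ (fun x => E k x (β k)) (traj E N0 β k))) :
    ∀ k < K, HasFDerivAt
      (fun b => cost K E g gK N0 (Function.update β k b))
      (fderiv ℝ (fun b => g k (traj E N0 β k) b) (β k) +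
        (Υ (k + 1)).comp (fderiv ℝ (fun b => E k (traj E N0 β k) b) (β k)))
      (β k) := by
  intro k hk
  have hgk := hg k hk
  have hEk := hE k hk
  have hgb : Differentiable ℝ (fun b => g k (traj E N0 β k) b) := by fun_prop
  have hEb : Differentiable ℝ (fun b => E k (traj E N0 β k) b) := by fun_prop
  have hV : HasFDerivAt (costToGo E g gK β (K - (k + 1)) (k + 1)) (Υ (k + 1))
      (E k (traj E N0 β k) (β k)) :=
    hasFDerivAt_costToGo hE hg hgK N0 β Υ hΥK hΥ _ (k + 1) (by omega)
  simp only [cost_update E g gK N0 β hk]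
  exact ((hgb _).hasFDerivAt.add (hV.comp _ (hEb _).hasFDerivAt)).const_add _

/-- discrete-time adjoint (costate) formula for the gradient of the
finite-horizon optimal control criterion. With state space `ℝⁿ`, control space `ℝᵐ`,
continuously differentiable dynamics `E_k`, stage costs `g_k` and terminal cost `g_K`,
and adjoint covectors `Υ` defined by the backward recursion
`Υ_K = Dg_K(N_K)`, `Υ_k = D_N g_k(N_k, β_k) + Υ_{k+1} ∘ D_N E_k(N_k, β_k)`,
the partial Fréchet derivative of `J` with respect to the control `β_k` exists and equals
`D_β g_k(N_k, β_k) + Υ_{k+1} ∘ D_β E_k(N_k, β_k)`. -/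
theorem stmt14 (n m K : ℕ) (hK : 1 ≤ K)
    (E : ℕ → EuclideanSpace ℝ (Fin n) → EuclideanSpace ℝ (Fin m) → EuclideanSpace ℝ (Fin n))
    (g : ℕ → EuclideanSpace ℝ (Fin n) → EuclideanSpace ℝ (Fin m) → ℝ)
    (gK : EuclideanSpace ℝ (Fin n) → ℝ)
    (hE : ∀ k < K, ContDiff ℝ 1
      (fun p : EuclideanSpace ℝ (Fin n) × EuclideanSpace ℝ (Fin m) => E k p.1 p.2))
    (hg : ∀ k < K, ContDiff ℝ 1
      (fun p : EuclideanSpace ℝ (Fin n) × EuclideanSpace ℝ (Fin m) => g k p.1 p.2))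
    (hgK : ContDiff ℝ 1 gK)
    (N0 : EuclideanSpace ℝ (Fin n)) (β : ℕ → EuclideanSpace ℝ (Fin m))
    (Υ : ℕ → (EuclideanSpace ℝ (Fin n) →L[ℝ] ℝ))
    (hΥK : Υ K = fderiv ℝ gK (traj E N0 β K))
    (hΥ : ∀ k < K, Υ k =
      fderiv ℝ (fun x => g k x (β k)) (traj E N0 β k) +
        (Υ (k + 1)).comp (fderiv ℝ (fun x => E k x (β k)) (traj E N0 β k))) :
    ∀ k < K, HasFDerivAt
      (fun b => cost K E g gK N0 (Function.update β k b))
      (fderiv ℝ (fun b => g k (traj E N0 β k) b) (β k) +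
        (Υ (k + 1)).comp (fderiv ℝ (fun b => E k (traj E N0 β k) b) (β k)))
      (β k) :=
  stmt14_general n m K E g gK hE hg hgK N0 β Υ hΥK hΥ
end
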